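/- Every eigenvalue λ of 𝒫⁻¹𝒜 is real and satisfies 0 < λ ≤ 1. Moreover: (i) for every nonzero x ∈ ℝⁿ, the vector (x; −γW⁻¹Cx) is an eigenvector with eigenvalue 1; (ii) every eigenvalue λ ≠ 1 equals γ·xᵀCᵀW⁻¹Cx / xᵀ(A + γCᵀW⁻¹C)x for some nonzero x ∈ ℝⁿ with x ∉ ker C. -/

import Mathlib

open Matrix

section AuxStmt4

variable {m k : Type*} [Fintype m] [Fintype k]

lemma aux4_ofReal_mulVec (M : Matrix m k ℝ) (a : k → ℝ) :
    M.map Complex.ofReal *ᵥ (fun j => (a j : ℂ)) = fun i => ((M *ᵥ a) i : ℂ) := by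
  funext i
  simp [Matrix.mulVec, dotProduct]

lemma aux4_re_mulVec (M : Matrix m k ℝ) (z : k → ℂ) (i : m) :
    ((M.map Complex.ofReal *ᵥ z) i).re = (M *ᵥ fun j => (z j).re) i := by
  simp [Matrix.mulVec, dotProduct, Complex.re_sum, Complex.mul_re]

lemma aux4_im_mulVec (M : Matrix m k ℝ) (z : k → ℂ) (i : m) :
    ((M.map Complex.ofReal *ᵥ z) i).im = (M *ᵥ fun j => (z j).im) i := by
  simp [Matrix.mulVec, dotProduct, Complex.im_sum, Complex.mul_im]

lemma aux4_star_mulVec (M : Matrix m k ℝ) (z : k → ℂ) :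
    star (M.map Complex.ofReal *ᵥ z) = M.map Complex.ofReal *ᵥ star z := by
  funext i
  simp [Matrix.mulVec, dotProduct, star_sum, Complex.conj_ofReal]

lemma aux4_real_symm_dot (M : Matrix k k ℝ) (hM : Mᵀ = M) (u w : k → ℝ) :
    u ⬝ᵥ M *ᵥ w = w ⬝ᵥ M *ᵥ u := by
  rw [Matrix.dotProduct_mulVec, ← Matrix.mulVec_transpose, hM, dotProduct_comm]

lemma aux4_symm_dot (M : Matrix k k ℝ) (hM : Mᵀ = M) (u w : k → ℂ) :
    (M.map Complex.ofReal *ᵥ u) ⬝ᵥ w = u ⬝ᵥ (M.map Complex.ofReal *ᵥ w) := by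
  have ht : (M.map Complex.ofReal)ᵀ = M.map Complex.ofReal := by
    rw [← Matrix.transpose_map, hM]
  rw [Matrix.dotProduct_mulVec, ← Matrix.mulVec_transpose, ht]

lemma aux4_quad_repr (M : Matrix k k ℝ) (hM : Mᵀ = M) (z : k → ℂ) :
    star z ⬝ᵥ (M.map Complex.ofReal *ᵥ z) =
      (((fun i => (z i).re) ⬝ᵥ M *ᵥ (fun i => (z i).re) +
        (fun i => (z i).im) ⬝ᵥ M *ᵥ (fun i => (z i).im) : ℝ) : ℂ) := by
  have hre : (star z ⬝ᵥ (M.map Complex.ofReal *ᵥ z)).re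
      = ∑ i, ((z i).re * (M *ᵥ fun j => (z j).re) i + (z i).im * (M *ᵥ fun j => (z j).im) i) := by
    simp only [dotProduct, Complex.re_sum]
    refine Finset.sum_congr rfl fun i _ => ?_
    rw [Pi.star_apply, Complex.star_def, Complex.mul_re, Complex.conj_re, Complex.conj_im,
      aux4_re_mulVec, aux4_im_mulVec]
    ring
  have him : (star z ⬝ᵥ (M.map Complex.ofReal *ᵥ z)).im
      = ∑ i, ((z i).re * (M *ᵥ fun j => (z j).im) i - (z i).im * (M *ᵥ fun j => (z j).re) i) := by
    simp only [dotProduct, Complex.im_sum]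
    refine Finset.sum_congr rfl fun i _ => ?_
    rw [Pi.star_apply, Complex.star_def, Complex.mul_im, Complex.conj_re, Complex.conj_im,
      aux4_re_mulVec, aux4_im_mulVec]
    ring
  apply Complex.ext
  · rw [hre, Complex.ofReal_re, Finset.sum_add_distrib]
    rfl
  · rw [him, Complex.ofReal_im, Finset.sum_sub_distrib]
    exact sub_eq_zero_of_eq (aux4_real_symm_dot M hM (fun i => (z i).re) (fun j => (z j).im))

lemma aux4_quad_pos (M : Matrix k k ℝ) (hM : M.PosDef) (z : k → ℂ) (hz : z ≠ 0) :
    0 < (fun i => (z i).re) ⬝ᵥ M *ᵥ (fun i => (z i).re) +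
        (fun i => (z i).im) ⬝ᵥ M *ᵥ (fun i => (z i).im) := by
  have h1 : ∀ u : k → ℝ, 0 ≤ u ⬝ᵥ M *ᵥ u := fun u => by simpa using hM.posSemidef.dotProduct_mulVec_nonneg u
  have h2 : ∀ u : k → ℝ, u ≠ 0 → 0 < u ⬝ᵥ M *ᵥ u := fun u hu => by simpa using hM.dotProduct_mulVec_pos hu
  by_cases hr : (fun i => (z i).re) = 0
  · have hi : (fun i => (z i).im) ≠ 0 := by
      intro h
      apply hz
      funext i
      exact Complex.ext (congrFun hr i) (congrFun h i)
    rw [hr]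
    simpa using h2 _ hi
  · exact add_pos_of_pos_of_nonneg (h2 _ hr) (h1 _)

lemma aux4_symm_of_posdef {M : Matrix k k ℝ} (h : M.PosDef) : Mᵀ = M := by
  ext i j
  have := congrFun (congrFun h.1 i) j
  simpa [Matrix.conjTranspose_apply] using this

end AuxStmt4

lemma aux4_Ag (n l : ℕ)
    (A : Matrix (Fin n) (Fin n) ℝ) (hA : A.PosDef)
    (C : Matrix (Fin l) (Fin n) ℝ)
    (W : Matrix (Fin l) (Fin l) ℝ) (hW : W.PosDef)
    (γ : ℝ) (hγ : 0 < γ)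
    (Ag : Matrix (Fin n) (Fin n) ℝ)
    (hAg : Ag = A + γ • (Cᵀ * W⁻¹ * C)) : Ag.PosDef := by
  have hCWC : (Cᵀ * W⁻¹ * C).PosSemidef := by
    have h := hW.inv.posSemidef.conjTranspose_mul_mul_same (B := C)
    have hct : Cᴴ = Cᵀ := by ext i j; simp [Matrix.conjTranspose_apply]
    rwa [hct] at h
  rw [hAg]
  refine hA.add_posSemidef (.of_dotProduct_mulVec_nonneg ?_ fun x => ?_)
  · show (γ • (Cᵀ * W⁻¹ * C))ᴴ = _
    rw [Matrix.conjTranspose_smul, hCWC.1.eq]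
    simp
  · rw [Matrix.smul_mulVec, dotProduct_smul]
    exact smul_nonneg hγ.le (hCWC.dotProduct_mulVec_nonneg x)

lemma aux4_PPdet (n l : ℕ)
    (W : Matrix (Fin l) (Fin l) ℝ) (hW : W.PosDef)
    (γ : ℝ) (hγ : 0 < γ)
    (Ag : Matrix (Fin n) (Fin n) ℝ) (hAgPD : Ag.PosDef)
    (C : Matrix (Fin l) (Fin n) ℝ)
    (PP : Matrix (Fin n ⊕ Fin l) (Fin n ⊕ Fin l) ℝ)
    (hPPdef : PP = fromBlocks Ag Cᵀ 0 (-(γ⁻¹ • W))) : IsUnit PP.det := by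
  rw [hPPdef, Matrix.det_fromBlocks_zero₂₁]
  have h2 : (-(γ⁻¹ • W)).det = (-γ⁻¹)^l * W.det := by
    rw [← neg_smul, Matrix.det_smul, Fintype.card_fin]
  rw [h2]
  refine isUnit_iff_ne_zero.mpr (mul_ne_zero hAgPD.det_pos.ne' (mul_ne_zero ?_ hW.det_pos.ne'))
  exact pow_ne_zero _ (neg_ne_zero.mpr (inv_ne_zero hγ.ne'))

lemma aux4_CTinj (n l : ℕ)
    (C : Matrix (Fin l) (Fin n) ℝ) (hC : C.rank = l) :
    ∀ b : Fin l → ℝ, Cᵀ *ᵥ b = 0 → b = 0 := by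
  have hr : (C * Cᵀ).rank = Fintype.card (Fin l) := by
    rw [Matrix.rank_self_mul_transpose, hC, Fintype.card_fin]
  have hunit : IsUnit (C * Cᵀ) := by
    rw [← Matrix.mulVec_surjective_iff_isUnit]
    have htop : LinearMap.range (C * Cᵀ).mulVecLin = ⊤ := by
      apply Submodule.eq_top_of_finrank_eq
      unfold Matrix.rank at hr
      rw [hr, Module.finrank_fintype_fun_eq_card]
    intro w
    obtain ⟨u, hu⟩ := LinearMap.range_eq_top.mp htop w
    exact ⟨u, hu⟩
  intro b hb
  have h0 : (C * Cᵀ) *ᵥ b = (C * Cᵀ) *ᵥ 0 := by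
    rw [← Matrix.mulVec_mulVec, hb, Matrix.mulVec_zero, Matrix.mulVec_zero]
  exact Matrix.mulVec_injective_iff_isUnit.mpr hunit h0

lemma aux4_key (n l : ℕ)
    (A : Matrix (Fin n) (Fin n) ℝ) (hA : A.PosDef)
    (C : Matrix (Fin l) (Fin n) ℝ) (hC : C.rank = l)
    (W : Matrix (Fin l) (Fin l) ℝ) (hW : W.PosDef)
    (γ : ℝ) (hγ : 0 < γ)
    (Ag : Matrix (Fin n) (Fin n) ℝ)
    (hAg : Ag = A + γ • (Cᵀ * W⁻¹ * C))
    (AA PP : Matrix (Fin n ⊕ Fin l) (Fin n ⊕ Fin l) ℝ)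
    (hAAdef : AA = fromBlocks Ag Cᵀ C 0)
    (hPPdef : PP = fromBlocks Ag Cᵀ 0 (-(γ⁻¹ • W)))
    (μ : ℂ) (v : Fin n ⊕ Fin l → ℂ) (hv : v ≠ 0)
    (hEig : ((PP.map Complex.ofReal)⁻¹ * AA.map Complex.ofReal) *ᵥ v = μ • v)
    (hμ1 : μ ≠ 1) :
    ∃ x : Fin n → ℝ, x ≠ 0 ∧ C *ᵥ x ≠ 0 ∧ ∃ r : ℝ, μ = (r : ℂ) ∧ 0 < r ∧ r < 1 ∧
      r = γ * (x ⬝ᵥ (Cᵀ * W⁻¹ * C) *ᵥ x) /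
            (x ⬝ᵥ (A + γ • (Cᵀ * W⁻¹ * C)) *ᵥ x) := by
  have hWT : Wᵀ = W := aux4_symm_of_posdef hW
  have hAgPD : Ag.PosDef := aux4_Ag n l A hA C W hW γ hγ Ag hAg
  have hAgT : Agᵀ = Ag := aux4_symm_of_posdef hAgPD
  have hWdet : IsUnit W.det := hW.det_pos.ne'.isUnit
  have hPPdet : IsUnit PP.det := aux4_PPdet n l W hW γ hγ Ag hAgPD C PP hPPdef
  have hPPcdet : IsUnit (PP.map Complex.ofReal).det := by
    have h : (PP.map Complex.ofReal).det = Complex.ofReal PP.det :=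
      (RingHom.map_det Complex.ofRealHom PP).symm
    rw [h]
    exact isUnit_iff_ne_zero.mpr (Complex.ofReal_ne_zero.mpr (isUnit_iff_ne_zero.mp hPPdet))
  -- basic eigen equation
  have hAv : AA.map Complex.ofReal *ᵥ v = μ • (PP.map Complex.ofReal *ᵥ v) := by
    have h0 := congrArg (fun w => (PP.map Complex.ofReal) *ᵥ w) hEig
    simp only [Matrix.mulVec_mulVec] at h0
    rwa [← Matrix.mul_assoc, Matrix.mul_nonsing_inv _ hPPcdet, Matrix.one_mul,
      Matrix.mulVec_smul] at h0
  set x : Fin n → ℂ := fun i => v (Sum.inl i) with hxdef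
  set y : Fin l → ℂ := fun j => v (Sum.inr j) with hydef
  have hveq : v = Sum.elim x y := by funext s; cases s <;> rfl
  have hAAc : AA.map Complex.ofReal =
      fromBlocks (Ag.map Complex.ofReal) ((C.map Complex.ofReal)ᵀ) (C.map Complex.ofReal) 0 := by
    rw [hAAdef, Matrix.fromBlocks_map, Matrix.transpose_map, Matrix.map_zero _ Complex.ofReal_zero]
  have hPPc : PP.map Complex.ofReal =
      fromBlocks (Ag.map Complex.ofReal) ((C.map Complex.ofReal)ᵀ) 0
        ((-(γ⁻¹ • W)).map Complex.ofReal) := by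
    rw [hPPdef, Matrix.fromBlocks_map, Matrix.transpose_map, Matrix.map_zero _ Complex.ofReal_zero]
  rw [hveq, hAAc, hPPc, Matrix.fromBlocks_mulVec, Matrix.fromBlocks_mulVec] at hAv
  have hE1 : Ag.map Complex.ofReal *ᵥ x + (C.map Complex.ofReal)ᵀ *ᵥ y
      = μ • (Ag.map Complex.ofReal *ᵥ x + (C.map Complex.ofReal)ᵀ *ᵥ y) := by
    funext i
    simpa using congrFun hAv (Sum.inl i)
  have hE2 : C.map Complex.ofReal *ᵥ x = μ • ((-(γ⁻¹ • W)).map Complex.ofReal *ᵥ y) := by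
    funext j
    simpa using congrFun hAv (Sum.inr j)
  have hNe : (1 : ℂ) - μ ≠ 0 := sub_ne_zero.mpr (Ne.symm hμ1)
  have hE1' : Ag.map Complex.ofReal *ᵥ x + (C.map Complex.ofReal)ᵀ *ᵥ y = 0 := by
    have h : ((1 : ℂ) - μ) • (Ag.map Complex.ofReal *ᵥ x + (C.map Complex.ofReal)ᵀ *ᵥ y) = 0 := by
      rw [sub_smul, one_smul, sub_eq_zero]
      exact hE1
    rcases smul_eq_zero.mp h with h' | h'
    · exact absurd h' hNe
    · exact h'
  have hDT : (-(γ⁻¹ • W))ᵀ = -(γ⁻¹ • W) := by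
    rw [Matrix.transpose_neg, Matrix.transpose_smul, hWT]
  have hy0 : y ≠ 0 := by
    intro h
    rw [h, Matrix.mulVec_zero, add_zero] at hE1'
    have hx0 : x = 0 := by
      by_contra hxne
      have hpos := aux4_quad_pos Ag hAgPD x hxne
      have hq := aux4_quad_repr Ag hAgT x
      rw [hE1', dotProduct_zero] at hq
      have := (Complex.ofReal_eq_zero.mp hq.symm)
      linarith
    apply hv
    rw [hveq, hx0, h]
    funext s
    cases s <;> rfl
  -- reality of μ
  have hq2 := aux4_quad_repr W hWT y
  have hq2pos := aux4_quad_pos W hW y hy0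
  have hq1 := aux4_quad_repr Ag hAgT x
  have hmap : ((-(γ⁻¹ • W)).map Complex.ofReal)
      = -((Complex.ofReal γ)⁻¹ • W.map Complex.ofReal) := by
    ext i j
    simp [Matrix.map_apply, Matrix.neg_apply, Matrix.smul_apply, smul_eq_mul,
      Complex.ofReal_neg, Complex.ofReal_mul, Complex.ofReal_inv]
  have hkey : star x ⬝ᵥ (Ag.map Complex.ofReal *ᵥ x)
      = (starRingEnd ℂ) μ * ((Complex.ofReal γ)⁻¹ * (star y ⬝ᵥ (W.map Complex.ofReal *ᵥ y))) := by
    have e1 : Ag.map Complex.ofReal *ᵥ x = -((C.map Complex.ofReal)ᵀ *ᵥ y) :=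
      eq_neg_of_add_eq_zero_left hE1'
    calc star x ⬝ᵥ (Ag.map Complex.ofReal *ᵥ x)
        = -(star x ⬝ᵥ ((C.map Complex.ofReal)ᵀ *ᵥ y)) := by rw [e1, dotProduct_neg]
      _ = -((C.map Complex.ofReal *ᵥ star x) ⬝ᵥ y) := by
          rw [Matrix.dotProduct_mulVec, Matrix.vecMul_transpose]
      _ = -(star (C.map Complex.ofReal *ᵥ x) ⬝ᵥ y) := by rw [aux4_star_mulVec]
      _ = -(star (μ • ((-(γ⁻¹ • W)).map Complex.ofReal *ᵥ y)) ⬝ᵥ y) := by rw [hE2]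
      _ = -((starRingEnd ℂ) μ * ((((-(γ⁻¹ • W)).map Complex.ofReal) *ᵥ star y) ⬝ᵥ y)) := by
          rw [star_smul, aux4_star_mulVec, smul_dotProduct, smul_eq_mul]
          rfl
      _ = -((starRingEnd ℂ) μ * (star y ⬝ᵥ (((-(γ⁻¹ • W)).map Complex.ofReal) *ᵥ y))) := by
          rw [aux4_symm_dot _ hDT]
      _ = (starRingEnd ℂ) μ * ((Complex.ofReal γ)⁻¹ * (star y ⬝ᵥ (W.map Complex.ofReal *ᵥ y))) := by
          rw [hmap]
          simp only [Matrix.neg_mulVec, Matrix.smul_mulVec, dotProduct_neg,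
            dotProduct_smul, smul_eq_mul]
          ring
  -- extract real scalars
  obtain ⟨qx, hqxnn, hqxeq⟩ : ∃ qx : ℝ, 0 ≤ qx ∧
      star x ⬝ᵥ (Ag.map Complex.ofReal *ᵥ x) = (qx : ℂ) :=
    ⟨_, add_nonneg (by simpa using hAgPD.posSemidef.dotProduct_mulVec_nonneg _) (by simpa using hAgPD.posSemidef.dotProduct_mulVec_nonneg _), hq1⟩
  obtain ⟨qy, hqy, hqyeq⟩ : ∃ qy : ℝ, 0 < qy ∧
      star y ⬝ᵥ (W.map Complex.ofReal *ᵥ y) = (qy : ℂ) := ⟨_, hq2pos, hq2⟩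
  have h1 : (qy : ℂ) ≠ 0 := Complex.ofReal_ne_zero.mpr hqy.ne'
  have h2 : (γ : ℂ) ≠ 0 := Complex.ofReal_ne_zero.mpr hγ.ne'
  rw [hqxeq, hqyeq] at hkey
  set r : ℝ := γ * qx / qy with hrdef
  have hconj : (starRingEnd ℂ) μ = (r : ℂ) := by
    have hkey2 : (γ : ℂ) * (qx : ℂ) = (starRingEnd ℂ) μ * (qy : ℂ) := by
      rw [hkey]
      field_simp
    rw [hrdef]
    push_cast
    rw [eq_div_iff h1]
    exact hkey2.symm
  have hμr : μ = (r : ℂ) := by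
    have h3 := congrArg (starRingEnd ℂ) hconj
    rwa [Complex.conj_conj, Complex.conj_ofReal] at h3
  -- real equations
  have hE1re : Ag *ᵥ (fun i => (x i).re) + Cᵀ *ᵥ (fun j => (y j).re) = 0 := by
    funext i
    have h := congrFun hE1' i
    rw [← Matrix.transpose_map] at h
    simp only [Pi.add_apply, Pi.zero_apply] at h
    have h2 := congrArg Complex.re h
    rw [Complex.add_re, aux4_re_mulVec, aux4_re_mulVec] at h2
    simpa using h2
  have hE1im : Ag *ᵥ (fun i => (x i).im) + Cᵀ *ᵥ (fun j => (y j).im) = 0 := by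
    funext i
    have h := congrFun hE1' i
    rw [← Matrix.transpose_map] at h
    simp only [Pi.add_apply, Pi.zero_apply] at h
    have h2 := congrArg Complex.im h
    rw [Complex.add_im, aux4_im_mulVec, aux4_im_mulVec] at h2
    simpa using h2
  have hE2re : C *ᵥ (fun i => (x i).re) = r • ((-(γ⁻¹ • W)) *ᵥ (fun j => (y j).re)) := by
    funext j
    have h := congrFun hE2 j
    rw [hμr] at h
    have h2 := congrArg Complex.re h
    rw [aux4_re_mulVec] at h2
    simp only [Pi.smul_apply, smul_eq_mul, Complex.mul_re, Complex.ofReal_re,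
      Complex.ofReal_im, zero_mul, sub_zero] at h2
    rw [aux4_re_mulVec] at h2
    simpa using h2
  have hE2im : C *ᵥ (fun i => (x i).im) = r • ((-(γ⁻¹ • W)) *ᵥ (fun j => (y j).im)) := by
    funext j
    have h := congrFun hE2 j
    rw [hμr] at h
    have h2 := congrArg Complex.im h
    rw [aux4_im_mulVec] at h2
    simp only [Pi.smul_apply, smul_eq_mul, Complex.mul_im, Complex.ofReal_re,
      Complex.ofReal_im, zero_mul, add_zero] at h2
    rw [aux4_im_mulVec] at h2
    simpa using h2
  have hCT := aux4_CTinj n l C hC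
  obtain ⟨a, b, ha, hR1, hR2⟩ : ∃ (a : Fin n → ℝ) (b : Fin l → ℝ), a ≠ 0 ∧
      Ag *ᵥ a + Cᵀ *ᵥ b = 0 ∧ C *ᵥ a = r • ((-(γ⁻¹ • W)) *ᵥ b) := by
    by_cases hxr : (fun i => (x i).re) = 0
    · by_cases hxi : (fun i => (x i).im) = 0
      · exfalso
        have hyr : (fun j => (y j).re) = 0 := by
          apply hCT
          have h := hE1re
          rw [hxr, Matrix.mulVec_zero, zero_add] at h
          exact h
        have hyi : (fun j => (y j).im) = 0 := by
          apply hCT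
          have h := hE1im
          rw [hxi, Matrix.mulVec_zero, zero_add] at h
          exact h
        apply hy0
        funext j
        exact Complex.ext (congrFun hyr j) (congrFun hyi j)
      · exact ⟨_, _, hxi, hE1im, hE2im⟩
    · exact ⟨_, _, hxr, hE1re, hE2re⟩
  -- real scalar computations
  have hb' : C *ᵥ a = (-(r * γ⁻¹)) • (W *ᵥ b) := by
    rw [hR2, Matrix.neg_mulVec, Matrix.smul_mulVec, smul_neg, smul_smul, ← neg_smul]
  have hAga : a ⬝ᵥ Ag *ᵥ a = (r * γ⁻¹) * (b ⬝ᵥ W *ᵥ b) := by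
    have e1 : Ag *ᵥ a = -(Cᵀ *ᵥ b) := eq_neg_of_add_eq_zero_left hR1
    rw [e1, dotProduct_neg, Matrix.dotProduct_mulVec, Matrix.vecMul_transpose, hb',
      smul_dotProduct, smul_eq_mul, dotProduct_comm]
    ring
  have hApos : 0 < a ⬝ᵥ Ag *ᵥ a := by simpa using hAgPD.dotProduct_mulVec_pos ha
  have hbWb_nonneg : 0 ≤ b ⬝ᵥ W *ᵥ b := by simpa using hW.posSemidef.dotProduct_mulVec_nonneg b
  have hbWb_pos : 0 < b ⬝ᵥ W *ᵥ b := by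
    rcases hbWb_nonneg.lt_or_eq with h | h
    · exact h
    · exfalso
      rw [hAga, ← h, mul_zero] at hApos
      exact lt_irrefl _ hApos
  have hrγ : 0 < r * γ⁻¹ := by
    have hp := hApos
    rw [hAga] at hp
    by_contra hc
    push_neg at hc
    nlinarith
  have hrpos : 0 < r := by
    have h := mul_pos hrγ hγ
    rwa [mul_assoc, inv_mul_cancel₀ hγ.ne', mul_one] at h
  have hQ : a ⬝ᵥ (Cᵀ * W⁻¹ * C) *ᵥ a = (r * γ⁻¹)^2 * (b ⬝ᵥ W *ᵥ b) := by
    have hh : (Cᵀ * W⁻¹ * C) *ᵥ a = Cᵀ *ᵥ (W⁻¹ *ᵥ (C *ᵥ a)) := by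
      rw [← Matrix.mulVec_mulVec, ← Matrix.mulVec_mulVec]
    rw [hh, Matrix.dotProduct_mulVec, Matrix.vecMul_transpose, hb', Matrix.mulVec_smul,
      Matrix.mulVec_mulVec, Matrix.nonsing_inv_mul W hWdet, Matrix.one_mulVec,
      smul_dotProduct, dotProduct_smul, smul_eq_mul, smul_eq_mul,
      dotProduct_comm]
    ring
  have hsplit : a ⬝ᵥ Ag *ᵥ a = a ⬝ᵥ A *ᵥ a + γ * (a ⬝ᵥ (Cᵀ * W⁻¹ * C) *ᵥ a) := by
    rw [hAg, Matrix.add_mulVec, dotProduct_add, Matrix.smul_mulVec,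
      dotProduct_smul, smul_eq_mul]
  have hgQ : γ * (a ⬝ᵥ (Cᵀ * W⁻¹ * C) *ᵥ a) = r * (a ⬝ᵥ Ag *ᵥ a) := by
    rw [hQ, hAga]
    field_simp
  have hAa : 0 < a ⬝ᵥ A *ᵥ a := by simpa using hA.dotProduct_mulVec_pos ha
  refine ⟨a, ha, ?_, r, hμr, hrpos, ?_, ?_⟩
  · intro h
    have hz2 : (-(r * γ⁻¹)) • (W *ᵥ b) = 0 := by rw [← hb', h]
    rcases smul_eq_zero.mp hz2 with h' | h'
    · exact absurd h' (neg_ne_zero.mpr hrγ.ne')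
    · rw [h', dotProduct_zero] at hbWb_pos
      exact lt_irrefl _ hbWb_pos
  · nlinarith
  · have hdenom : a ⬝ᵥ (A + γ • (Cᵀ * W⁻¹ * C)) *ᵥ a = a ⬝ᵥ Ag *ᵥ a := by rw [hAg]
    rw [hdenom, hgQ, mul_div_assoc, div_self hApos.ne', mul_one]

/-- Every eigenvalue λ of 𝒫⁻¹𝒜 is real and satisfies 0 < λ ≤ 1. Moreover:
(i) for every nonzero x ∈ ℝⁿ, the vector (x; −γW⁻¹Cx) is an eigenvector with
eigenvalue 1; (ii) every eigenvalue λ ≠ 1 equals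
γ·xᵀCᵀW⁻¹Cx / xᵀ(A + γCᵀW⁻¹C)x for some nonzero x ∈ ℝⁿ with x ∉ ker C. -/
theorem stmt_4
    (n l : ℕ) (hn : 0 < n) (hl : 0 < l) (hln : l ≤ n)
    (A : Matrix (Fin n) (Fin n) ℝ) (hA : A.PosDef)
    (C : Matrix (Fin l) (Fin n) ℝ) (hC : C.rank = l)
    (W : Matrix (Fin l) (Fin l) ℝ) (hW : W.PosDef)
    (γ : ℝ) (hγ : 0 < γ)
    (Ag : Matrix (Fin n) (Fin n) ℝ)
    (hAg : Ag = A + γ • (Cᵀ * W⁻¹ * C))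
    (AA PP : Matrix (Fin n ⊕ Fin l) (Fin n ⊕ Fin l) ℝ)
    (hAAdef : AA = fromBlocks Ag Cᵀ C 0)
    (hPPdef : PP = fromBlocks Ag Cᵀ 0 (-(γ⁻¹ • W))) :
    (∀ μ : ℂ, ∀ v : Fin n ⊕ Fin l → ℂ, v ≠ 0 →
      ((PP.map Complex.ofReal)⁻¹ * AA.map Complex.ofReal) *ᵥ v = μ • v →
      ∃ r : ℝ, μ = (r : ℂ) ∧ 0 < r ∧ r ≤ 1) ∧
    (∀ x : Fin n → ℝ, x ≠ 0 →
      Sum.elim x (-(γ • (W⁻¹ *ᵥ (C *ᵥ x)))) ≠ 0 ∧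
      (PP⁻¹ * AA) *ᵥ Sum.elim x (-(γ • (W⁻¹ *ᵥ (C *ᵥ x))))
        = (1 : ℝ) • Sum.elim x (-(γ • (W⁻¹ *ᵥ (C *ᵥ x))))) ∧
    (∀ μ : ℂ, ∀ v : Fin n ⊕ Fin l → ℂ, v ≠ 0 →
      ((PP.map Complex.ofReal)⁻¹ * AA.map Complex.ofReal) *ᵥ v = μ • v →
      μ ≠ 1 →
      ∃ x : Fin n → ℝ, x ≠ 0 ∧ C *ᵥ x ≠ 0 ∧
        μ = ((γ * (x ⬝ᵥ (Cᵀ * W⁻¹ * C) *ᵥ x) /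
              (x ⬝ᵥ (A + γ • (Cᵀ * W⁻¹ * C)) *ᵥ x) : ℝ) : ℂ)) := by
  have hAgPD : Ag.PosDef := aux4_Ag n l A hA C W hW γ hγ Ag hAg
  have hWdet : IsUnit W.det := hW.det_pos.ne'.isUnit
  have hPPdet : IsUnit PP.det := aux4_PPdet n l W hW γ hγ Ag hAgPD C PP hPPdef
  refine ⟨?_, ?_, ?_⟩
  · intro μ v hv he
    by_cases hμ : μ = 1
    · exact ⟨1, by rw [hμ]; norm_num, one_pos, le_refl 1⟩
    · obtain ⟨a, -, -, r, hμr, hr0, hr1, -⟩ :=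
        aux4_key n l A hA C hC W hW γ hγ Ag hAg AA PP hAAdef hPPdef μ v hv he hμ
      exact ⟨r, hμr, hr0, hr1.le⟩
  · intro x hx
    constructor
    · intro h
      apply hx
      funext i
      simpa using congrFun h (Sum.inl i)
    · have hAv : AA *ᵥ Sum.elim x (-(γ • (W⁻¹ *ᵥ (C *ᵥ x))))
          = PP *ᵥ Sum.elim x (-(γ • (W⁻¹ *ᵥ (C *ᵥ x)))) := by
        rw [hAAdef, hPPdef, Matrix.fromBlocks_mulVec, Matrix.fromBlocks_mulVec]
        simp only [Sum.elim_comp_inl, Sum.elim_comp_inr, Matrix.zero_mulVec, add_zero, zero_add,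
          Matrix.neg_mulVec]
        have hcomp : (γ⁻¹ • W) *ᵥ -(γ • (W⁻¹ *ᵥ (C *ᵥ x))) = -(C *ᵥ x) := by
          rw [Matrix.mulVec_neg, Matrix.mulVec_smul, Matrix.smul_mulVec,
            Matrix.mulVec_mulVec, Matrix.mul_nonsing_inv W hWdet, Matrix.one_mulVec,
            smul_smul, mul_inv_cancel₀ hγ.ne', one_smul]
        rw [hcomp, neg_neg]
      rw [← Matrix.mulVec_mulVec, hAv, Matrix.mulVec_mulVec, Matrix.nonsing_inv_mul _ hPPdet,
        Matrix.one_mulVec, one_smul]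
  · intro μ v hv he hμ
    obtain ⟨a, ha, hCa, r, hμr, hr0, hr1, hre⟩ :=
      aux4_key n l A hA C hC W hW γ hγ Ag hAg AA PP hAAdef hPPdef μ v hv he hμ
    exact ⟨a, ha, hCa, by rw [hμr, hre]⟩
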